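/- arXiv:2207.08946 — 11 statements merged into one kernel-verified Lean document; each statement's English description precedes it below -/
import Mathlib

section
/- Let θ be an action of a Lie triple system (L,[·,·,·]_L) on a Lie triple system (L',[·,·,·]_{L'}) and λ a scalar. Then L ⊕ L' with the bracket [x+u, y+v, z+w]_θ = [x,y,z]_L + D(x,y)w + θ(y,z)u − θ(x,z)v + λ[u,v,w]_{L'} is a Lie triple system (the semidirect product L ⋉_θ L'). -/
/-- `f` is `K`-linear in each of its three arguments. -/
def IsTri (K : Type*) [Field K] {A B C D : Type*}
    [AddCommGroup A] [Module K A] [AddCommGroup B] [Module K B]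
    [AddCommGroup C] [Module K C] [AddCommGroup D] [Module K D]
    (f : A → B → C → D) : Prop :=
  (∀ a a' b c, f (a + a') b c = f a b c + f a' b c) ∧
  (∀ (t : K) (a : A) (b : B) (c : C), f (t • a) b c = t • f a b c) ∧
  (∀ a b b' c, f a (b + b') c = f a b c + f a b' c) ∧
  (∀ (t : K) (a : A) (b : B) (c : C), f a (t • b) c = t • f a b c) ∧
  (∀ a b c c', f a b (c + c') = f a b c + f a b c') ∧
  (∀ (t : K) (a : A) (b : B) (c : C), f a b (t • c) = t • f a b c)

/-- A Lie triple system: a trilinear bracket satisfying `[a,a,b] = 0`, the cyclic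
identity and the derivation (Jacobi-type) identity. -/
def IsLTS (K : Type*) [Field K] {A : Type*} [AddCommGroup A] [Module K A]
    (br : A → A → A → A) : Prop :=
  IsTri K br ∧
  (∀ a b, br a a b = 0) ∧
  (∀ a b c, br a b c + br b c a + br c a b = 0) ∧
  (∀ a b c d e, br a b (br c d e) =
    br (br a b c) d e + br c (br a b d) e + br c d (br a b e))

/-- `D(a,b) = θ(b,a) - θ(a,b)`. -/
def Dop {A C : Type*} [AddCommGroup C] (θ : A → A → C → C) (a b : A) (x : C) : C :=
  θ b a x - θ a b x

/-- A representation of the Lie triple system `(A, br)` on `C`. -/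
def IsRep (K : Type*) [Field K] {A C : Type*}
    [AddCommGroup A] [Module K A] [AddCommGroup C] [Module K C]
    (br : A → A → A → A) (θ : A → A → C → C) : Prop :=
  IsTri K θ ∧
  (∀ a b c d x, θ c d (θ a b x) - θ b d (θ a c x) - θ a (br b c d) x
      + Dop θ b c (θ a d x) = 0) ∧
  (∀ a b c d x, θ c d (Dop θ a b x) - Dop θ a b (θ c d x)
      + θ (br a b c) d x + θ c (br a b d) x = 0)

/-- An action of the Lie triple system `(A, br)` on the Lie triple system `(C, br')`:
a representation such that every `θ x y u` is central in `C` and `θ x y` kills all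
brackets of `C`. -/
def IsAction (K : Type*) [Field K] {A C : Type*}
    [AddCommGroup A] [Module K A] [AddCommGroup C] [Module K C]
    (br : A → A → A → A) (br' : C → C → C → C) (θ : A → A → C → C) : Prop :=
  IsRep K br θ ∧
  (∀ x y u a b, br' (θ x y u) a b = 0) ∧
  (∀ x y u v w, θ x y (br' u v w) = 0)

/-- The semidirect product bracket on `A × C`. -/
def sdBr {K : Type*} [Field K] {A C : Type*}
    [AddCommGroup A] [Module K A] [AddCommGroup C] [Module K C]
    (br : A → A → A → A) (br' : C → C → C → C) (θ : A → A → C → C) (lam : K) :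
    A × C → A × C → A × C → A × C :=
  fun p q r =>
    (br p.1 q.1 r.1,
      Dop θ p.1 q.1 r.2 + θ q.1 r.1 p.2 - θ p.1 r.1 q.2 + lam • br' p.2 q.2 r.2)

/-- Relative Rota-Baxter operator of weight `lam` from `(C, br')` to `(A, br)`
with respect to `θ`. -/
def IsRRB (K : Type*) [Field K] {A C : Type*}
    [AddCommGroup A] [Module K A] [AddCommGroup C] [Module K C]
    (br : A → A → A → A) (br' : C → C → C → C) (θ : A → A → C → C) (lam : K)
    (T : C →ₗ[K] A) : Prop :=
  ∀ u v w, br (T u) (T v) (T w) =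
    T (Dop θ (T u) (T v) w - θ (T u) (T w) v + θ (T v) (T w) u + lam • br' u v w)

/-- The descendent bracket on `C` induced by `T`. -/
def descBr {K : Type*} [Field K] {A C : Type*}
    [AddCommGroup A] [Module K A] [AddCommGroup C] [Module K C]
    (br' : C → C → C → C) (θ : A → A → C → C) (lam : K) (T : C →ₗ[K] A) :
    C → C → C → C :=
  fun u v w => Dop θ (T u) (T v) w + θ (T v) (T w) u - θ (T u) (T w) v
      + lam • br' u v w

/-- `θ_T(u,v) x = [x, Tu, Tv] - T (D(x,Tu) v - θ(x,Tv) u)`. -/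
def thetaT {K : Type*} [Field K] {A C : Type*}
    [AddCommGroup A] [Module K A] [AddCommGroup C] [Module K C]
    (br : A → A → A → A) (θ : A → A → C → C) (T : C →ₗ[K] A) :
    C → C → A → A :=
  fun u v x => br x (T u) (T v) - T (Dop θ x (T u) v - θ x (T v) u)

/-- the semidirect product `L ⋉_θ L'` is a Lie triple system. -/
theorem stmt2 {K : Type*} [Field K] [CharZero K]
    {L L' : Type*} [AddCommGroup L] [Module K L] [AddCommGroup L'] [Module K L']
    (br : L → L → L → L) (br' : L' → L' → L' → L') (θ : L → L → L' → L')
    (hL : IsLTS K br) (hL' : IsLTS K br') (hθ : IsAction K br br' θ) (lam : K) :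
    IsLTS K (sdBr br br' θ lam) := by
  obtain ⟨⟨b1, b2, b3, b4, b5, b6⟩, bAlt, bCyc, bJac⟩ := hL
  obtain ⟨⟨c1, c2, c3, c4, c5, c6⟩, cAlt, cCyc, cJac⟩ := hL'
  obtain ⟨⟨⟨t1, t2, t3, t4, t5, t6⟩, R1, R2⟩, cent, kill⟩ := hθ
  -- auxiliary lemmas about θ
  have tneg : ∀ a b x, θ a b (-x) = -θ a b x := by
    intro a b x; have := t6 (-1 : K) a b x; simpa using this
  have tsub : ∀ a b x y, θ a b (x - y) = θ a b x - θ a b y := by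
    intro a b x y; rw [sub_eq_add_neg, t5, tneg, ← sub_eq_add_neg]
  have t0 : ∀ a b, θ a b (0 : L') = 0 := by
    intro a b; have := t6 (0 : K) a b 0; simpa using this
  -- auxiliary lemmas about br'
  have cneg1 : ∀ u v w, br' (-u) v w = -br' u v w := by
    intro u v w; have := c2 (-1 : K) u v w; simpa using this
  have cneg2 : ∀ u v w, br' u (-v) w = -br' u v w := by
    intro u v w; have := c4 (-1 : K) u v w; simpa using this
  have cneg3 : ∀ u v w, br' u v (-w) = -br' u v w := by
    intro u v w; have := c6 (-1 : K) u v w; simpa using this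
  have csub1 : ∀ u u' v w, br' (u - u') v w = br' u v w - br' u' v w := by
    intro u u' v w; rw [sub_eq_add_neg, c1, cneg1, ← sub_eq_add_neg]
  have csub2 : ∀ u v v' w, br' u (v - v') w = br' u v w - br' u v' w := by
    intro u v v' w; rw [sub_eq_add_neg, c3, cneg2, ← sub_eq_add_neg]
  have csub3 : ∀ u v w w', br' u v (w - w') = br' u v w - br' u v w' := by
    intro u v w w'; rw [sub_eq_add_neg, c5, cneg3, ← sub_eq_add_neg]
  have cskew : ∀ u v w, br' v u w = -br' u v w := by
    intro u v w
    have h := cAlt (u + v) w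
    rw [c1] at h
    rw [c3, c3, cAlt, cAlt] at h
    linear_combination (norm := module) h
  have cent2 : ∀ x y u a b, br' a (θ x y u) b = 0 := by
    intro x y u a b; rw [cskew, cent, neg_zero]
  have cent3 : ∀ x y u a b, br' a b (θ x y u) = 0 := by
    intro x y u a b
    have h := cCyc a b (θ x y u)
    rw [cent2, cent] at h
    linear_combination (norm := module) h
  -- key representation identities
  refine ⟨⟨?_, ?_, ?_, ?_, ?_, ?_⟩, ?_, ?_, ?_⟩
  · intro p p' q r
    refine Prod.ext ?_ ?_
    · simp only [sdBr, Prod.fst_add]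
      exact b1 _ _ _ _
    · simp only [sdBr, Prod.fst_add, Prod.snd_add, Dop, t1, t3, t5, c1]
      module
  · intro t p q r
    refine Prod.ext ?_ ?_
    · simp only [sdBr, Prod.smul_fst, Prod.smul_snd, b2]
    · simp only [sdBr, Prod.smul_fst, Prod.smul_snd, Dop, t2, t4, t6, c2]
      module
  · intro p q q' r
    refine Prod.ext ?_ ?_
    · simp only [sdBr, Prod.fst_add]
      exact b3 _ _ _ _
    · simp only [sdBr, Prod.fst_add, Prod.snd_add, Dop, t1, t3, t5, c3]
      module
  · intro t p q r
    refine Prod.ext ?_ ?_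
    · simp only [sdBr, Prod.smul_fst, Prod.smul_snd, b4]
    · simp only [sdBr, Prod.smul_fst, Prod.smul_snd, Dop, t2, t4, t6, c4]
      module
  · intro p q r r'
    refine Prod.ext ?_ ?_
    · simp only [sdBr, Prod.fst_add]
      exact b5 _ _ _ _
    · simp only [sdBr, Prod.fst_add, Prod.snd_add, Dop, t1, t3, t5, c5]
      module
  · intro t p q r
    refine Prod.ext ?_ ?_
    · simp only [sdBr, Prod.smul_fst, Prod.smul_snd, b6]
    · simp only [sdBr, Prod.smul_fst, Prod.smul_snd, Dop, t2, t4, t6, c6]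
      module
  · intro p q
    refine Prod.ext ?_ ?_
    · simp only [sdBr, bAlt, Prod.fst_zero]
    · simp only [sdBr, Dop, cAlt, smul_zero, Prod.snd_zero, sub_self]
      abel
  · intro p q r
    refine Prod.ext ?_ ?_
    · simp only [sdBr, Prod.fst_add, bCyc, Prod.fst_zero]
    · simp only [sdBr, Prod.snd_add, Dop, Prod.snd_zero]
      have h := cCyc p.2 q.2 r.2
      linear_combination (norm := module) lam • h
  · intro p q r s e
    have h1 := R1 q.1 r.1 s.1 e.1 p.2
    have h2 := R1 p.1 r.1 s.1 e.1 q.2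
    have h3 := R2 p.1 q.1 s.1 e.1 r.2
    have h4 := R2 p.1 q.1 r.1 e.1 s.2
    have h5 := R2 p.1 q.1 r.1 s.1 e.2
    have h6 := R2 p.1 q.1 s.1 r.1 e.2
    have h7 := cJac p.2 q.2 r.2 s.2 e.2
    simp only [Dop, tsub, t5] at h1 h2 h3 h4 h5 h6
    refine Prod.ext ?_ ?_
    · simp only [sdBr, Prod.fst_add]
      exact bJac _ _ _ _ _
    · simp only [sdBr, Prod.fst_add, Prod.snd_add, Dop, tsub, t5, t6, kill,
        smul_zero, csub1, csub2, csub3, c1, c3, c5, c2, c4, c6, cent, cent2,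
        cent3, sub_zero, zero_sub, add_zero, zero_add, sub_self, neg_zero]
      linear_combination (norm := module) h2 + h4 + h5 - h1 - h3 - h6
        + (lam * lam) • h7
end

section
/- Let θ be an action of a Lie triple system L on a Lie triple system L' and λ a scalar. A linear map T: L' → L is a relative Rota-Baxter operator of weight λ if and only if its graph Gr(T) = {Tu + u : u ∈ L'} is a subsystem (closed under the bracket) of the semidirect product Lie triple system L ⋉_θ L'. -/
/-- `T` is a relative Rota-Baxter operator of weight `λ` iff its graph
is a subsystem of the semidirect product. -/
theorem stmt3 {K : Type*} [Field K] [CharZero K]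
    {L L' : Type*} [AddCommGroup L] [Module K L] [AddCommGroup L'] [Module K L']
    (br : L → L → L → L) (br' : L' → L' → L' → L') (θ : L → L → L' → L')
    (hL : IsLTS K br) (hL' : IsLTS K br') (hθ : IsAction K br br' θ) (lam : K) (T : L' →ₗ[K] L) :
    IsRRB K br br' θ lam T ↔
      ∀ u v w : L', sdBr br br' θ lam (T u, u) (T v, v) (T w, w) ∈
        Set.range (fun u : L' => ((T u, u) : L × L')) := by
  constructor
  · intro h u v w
    refine ⟨Dop θ (T u) (T v) w + θ (T v) (T w) u - θ (T u) (T w) v + lam • br' u v w, ?_⟩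
    simp only [sdBr, Prod.mk.injEq]
    refine ⟨?_, trivial⟩
    rw [h u v w]
    congr 1
    abel
  · intro h u v w
    obtain ⟨z, hz⟩ := h u v w
    simp only [sdBr, Prod.mk.injEq] at hz
    rw [← hz.1, hz.2]
    congr 1
    abel
end

section
/- Let T: L' → L be a relative Rota-Baxter operator of weight λ with respect to an action θ. Then L' equipped with the bracket [u,v,w]_T = D(Tu,Tv)w + θ(Tv,Tw)u − θ(Tu,Tw)v + λ[u,v,w]_{L'} is a Lie triple system (the descendent Lie triple system). -/
/-- the descendent bracket of a relative Rota-Baxter operator of weight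
`λ` makes `L'` a Lie triple system. -/
theorem stmt4 {K : Type*} [Field K] [CharZero K]
    {L L' : Type*} [AddCommGroup L] [Module K L] [AddCommGroup L'] [Module K L']
    (br : L → L → L → L) (br' : L' → L' → L' → L') (θ : L → L → L' → L')
    (hL : IsLTS K br) (hL' : IsLTS K br') (hθ : IsAction K br br' θ) (lam : K) (T : L' →ₗ[K] L) (hT : IsRRB K br br' θ lam T) :
    IsLTS K (descBr br' θ lam T) := by
  obtain ⟨⟨⟨ta1, ts1, ta2, ts2, ta3, ts3⟩, rep1, rep2⟩, cent, kill⟩ := hθ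
  obtain ⟨⟨ba1, bs1, ba2, bs2, ba3, bs3⟩, alt', cyc', fund'⟩ := hL'
  have skew' : ∀ a b c, br' b a c = - br' a b c := by
    intro a b c
    have h := alt' (a + b) c
    simp only [ba1, ba2, alt'] at h
    linear_combination (norm := module) h
  have cent2 : ∀ a x y u b, br' a (θ x y u) b = 0 := by
    intro a x y u b
    rw [skew' (θ x y u) a b, cent, neg_zero]
  have cent3 : ∀ a b x y u, br' a b (θ x y u) = 0 := by
    intro a b x y u
    have h := cyc' a b (θ x y u)
    simp only [cent, cent2, add_zero] at h
    exact h
  have tn3 : ∀ x y u, θ x y (-u) = - θ x y u := by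
    intro x y u
    rw [← neg_one_smul K u, ts3, neg_one_smul]
  have tsub3 : ∀ x y u v, θ x y (u - v) = θ x y u - θ x y v := by
    intro x y u v
    rw [sub_eq_add_neg, ta3, tn3, sub_eq_add_neg]
  have Da1 : ∀ x x' y u, Dop θ (x + x') y u = Dop θ x y u + Dop θ x' y u := by
    intro x x' y u; simp only [Dop, ta1, ta2]; abel
  have Ds1 : ∀ (t : K) x y u, Dop θ (t • x) y u = t • Dop θ x y u := by
    intro t x y u; simp only [Dop, ts1, ts2, smul_sub]
  have Da2 : ∀ x y y' u, Dop θ x (y + y') u = Dop θ x y u + Dop θ x y' u := by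
    intro x y y' u; simp only [Dop, ta1, ta2]; abel
  have Ds2 : ∀ (t : K) x y u, Dop θ x (t • y) u = t • Dop θ x y u := by
    intro t x y u; simp only [Dop, ts1, ts2, smul_sub]
  have Da3 : ∀ x y u v, Dop θ x y (u + v) = Dop θ x y u + Dop θ x y v := by
    intro x y u v; simp only [Dop, ta3]; abel
  have Ds3 : ∀ (t : K) x y u, Dop θ x y (t • u) = t • Dop θ x y u := by
    intro t x y u; simp only [Dop, ts3, smul_sub]
  have Dsub3 : ∀ x y u v, Dop θ x y (u - v) = Dop θ x y u - Dop θ x y v := by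
    intro x y u v; simp only [Dop, tsub3]; abel
  have Dkill : ∀ x y u v w, Dop θ x y (br' u v w) = 0 := by
    intro x y u v w; simp only [Dop, kill, sub_zero]
  have hbsub : ∀ (u v w u' : L'), br' (u - u') v w = br' u v w - br' u' v w := by
    intro u v w u'
    rw [sub_eq_add_neg, ba1, ← neg_one_smul K u', bs1, neg_one_smul, sub_eq_add_neg]
  have hbsub2 : ∀ (u v w v' : L'), br' u (v - v') w = br' u v w - br' u v' w := by
    intro u v w v'
    rw [sub_eq_add_neg, ba2, ← neg_one_smul K v', bs2, neg_one_smul, sub_eq_add_neg]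
  have hbsub3 : ∀ (u v w w' : L'), br' u v (w - w') = br' u v w - br' u v w' := by
    intro u v w w'
    rw [sub_eq_add_neg, ba3, ← neg_one_smul K w', bs3, neg_one_smul, sub_eq_add_neg]
  have Dcent1 : ∀ x y u a b, br' (Dop θ x y u) a b = 0 := by
    intro x y u a b; simp only [Dop, hbsub, cent, sub_zero, sub_self]
  have Dcent2 : ∀ a x y u b, br' a (Dop θ x y u) b = 0 := by
    intro a x y u b; simp only [Dop, hbsub2, cent2, sub_zero, sub_self]
  have Dcent3 : ∀ a b x y u, br' a b (Dop θ x y u) = 0 := by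
    intro a b x y u; simp only [Dop, hbsub3, cent3, sub_zero, sub_self]
  have hA : ∀ p q r s x, θ p (br q r s) x
      = θ r s (θ p q x) - θ q s (θ p r x) + Dop θ q r (θ p s x) := by
    intro p q r s x
    linear_combination (norm := module) - rep1 p q r s x
  have hC : ∀ p q r s x, Dop θ p q (θ r s x)
      = θ r s (Dop θ p q x) + θ (br p q r) s x + θ r (br p q s) x := by
    intro p q r s x
    linear_combination (norm := module) - rep2 p q r s x
  have hE : ∀ p q r s x, Dop θ p q (Dop θ r s x)
      = Dop θ (br p q r) s x + Dop θ r (br p q s) x + Dop θ r s (Dop θ p q x) := by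
    intro p q r s x
    have h1 := hC p q r s x
    have h2 := hC p q s r x
    have h3 : Dop θ p q (Dop θ r s x) = Dop θ p q (θ s r x) - Dop θ p q (θ r s x) := by
      rw [show Dop θ r s x = θ s r x - θ r s x from rfl, Dsub3]
    rw [h3, h1, h2]
    simp only [Dop]
    abel
  refine ⟨⟨?_, ?_, ?_, ?_, ?_, ?_⟩, ?_, ?_, ?_⟩
  · intro a a' b c
    simp only [descBr, map_add, map_smul, Da1, Da2, Da3, Ds1, Ds2, Ds3,
      ta1, ta2, ta3, ts1, ts2, ts3, ba1, ba2, ba3, bs1, bs2, bs3, smul_add, smul_sub]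
    module
  · intro t a b c
    simp only [descBr, map_add, map_smul, Da1, Da2, Da3, Ds1, Ds2, Ds3,
      ta1, ta2, ta3, ts1, ts2, ts3, ba1, ba2, ba3, bs1, bs2, bs3, smul_add, smul_sub]
    module
  · intro a b b' c
    simp only [descBr, map_add, map_smul, Da1, Da2, Da3, Ds1, Ds2, Ds3,
      ta1, ta2, ta3, ts1, ts2, ts3, ba1, ba2, ba3, bs1, bs2, bs3, smul_add, smul_sub]
    module
  · intro t a b c
    simp only [descBr, map_add, map_smul, Da1, Da2, Da3, Ds1, Ds2, Ds3,
      ta1, ta2, ta3, ts1, ts2, ts3, ba1, ba2, ba3, bs1, bs2, bs3, smul_add, smul_sub]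
    module
  · intro a b c c'
    simp only [descBr, map_add, map_smul, Da1, Da2, Da3, Ds1, Ds2, Ds3,
      ta1, ta2, ta3, ts1, ts2, ts3, ba1, ba2, ba3, bs1, bs2, bs3, smul_add, smul_sub]
    module
  · intro t a b c
    simp only [descBr, map_add, map_smul, Da1, Da2, Da3, Ds1, Ds2, Ds3,
      ta1, ta2, ta3, ts1, ts2, ts3, ba1, ba2, ba3, bs1, bs2, bs3, smul_add, smul_sub]
    module
  · intro a b
    simp only [descBr, Dop, sub_self, alt', smul_zero]
    abel
  · intro a b c
    simp only [descBr, Dop]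
    linear_combination (norm := module) lam • cyc' a b c
  · intro a b c d e
    have hT2 : ∀ u v w, T (Dop θ (T u) (T v) w + θ (T v) (T w) u - θ (T u) (T w) v
        + lam • br' u v w) = br (T u) (T v) (T w) := by
      intro u v w
      rw [hT u v w]
      congr 1
      abel
    simp only [descBr, hT2]
    simp only [Da3, Dsub3, Ds3, ta3, tsub3, ts3, ba1, ba2, ba3, bs1, bs2, bs3,
      hbsub, hbsub2, hbsub3, Dkill, kill, cent, cent2, cent3, Dcent1, Dcent2, Dcent3,
      smul_zero, add_zero, zero_add, sub_zero, zero_sub, neg_zero, sub_self]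
    have hf : lam • lam • br' a b (br' c d e)
        = lam • lam • (br' (br' a b c) d e + br' c (br' a b d) e + br' c d (br' a b e)) := by
      rw [fund' a b c d e]
    linear_combination (norm := module)
      hE (T a) (T b) (T c) (T d) e
      + hC (T a) (T b) (T d) (T e) c
      - hC (T a) (T b) (T c) (T e) d
      + hA (T b) (T c) (T d) (T e) a
      - hA (T a) (T c) (T d) (T e) b
      + hf
end

section
/- Let θ be an action of a Lie triple system L on a Lie triple system L'. A linear map T: L' → L is a relative Rota-Baxter operator of weight λ if and only if the linear map on L ⊕ L' given in block form by (id, T; 0, 0), i.e., (x,u) ↦ (x + Tu, 0), is a Nijenhuis operator on the semidirect product Lie triple system L ⋉_θ L'. -/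
/-- A Nijenhuis operator on a triple bracket. -/
def IsNij {M : Type*} [AddCommGroup M] (bb : M → M → M → M) (N : M → M) : Prop :=
  ∀ x y z, bb (N x) (N y) (N z) =
    N (bb (N x) (N y) z) + N (bb x (N y) (N z)) + N (bb (N x) y (N z))
      - N (N (bb (N x) y z)) - N (N (bb x (N y) z)) - N (N (bb x y (N z)))
      + N (N (N (bb x y z)))

/-- `T` is a relative Rota-Baxter operator of weight `λ` iff
`(x,u) ↦ (x + Tu, 0)` is a Nijenhuis operator on `L ⋉_θ L'`. -/
theorem stmt6 {K : Type*} [Field K] [CharZero K]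
    {L L' : Type*} [AddCommGroup L] [Module K L] [AddCommGroup L'] [Module K L']
    (br : L → L → L → L) (br' : L' → L' → L' → L') (θ : L → L → L' → L')
    (hL : IsLTS K br) (hL' : IsLTS K br') (hθ : IsAction K br br' θ) (lam : K) (T : L' →ₗ[K] L) :
    IsRRB K br br' θ lam T ↔
      IsNij (sdBr br br' θ lam) (fun p : L × L' => ((p.1 + T p.2, 0) : L × L')) := by
  obtain ⟨⟨ba1, bs1, ba2, bs2, ba3, bs3⟩, -, -, -⟩ := hL
  obtain ⟨⟨pa1, ps1, pa2, ps2, pa3, ps3⟩, -, -, -⟩ := hL'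
  obtain ⟨⟨⟨ta1, ts1, ta2, ts2, ta3, ts3⟩, -, -⟩, -, -⟩ := hθ
  have bz1 : ∀ b c, br 0 b c = 0 := fun b c => by
    simpa using bs1 (0 : K) 0 b c
  have bz2 : ∀ a c, br a 0 c = 0 := fun a c => by
    simpa using bs2 (0 : K) a 0 c
  have bz3 : ∀ a b, br a b 0 = 0 := fun a b => by
    simpa using bs3 (0 : K) a b 0
  have pz1 : ∀ b c, br' 0 b c = 0 := fun b c => by
    simpa using ps1 (0 : K) 0 b c
  have pz2 : ∀ a c, br' a 0 c = 0 := fun a c => by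
    simpa using ps2 (0 : K) a 0 c
  have pz3 : ∀ a b, br' a b 0 = 0 := fun a b => by
    simpa using ps3 (0 : K) a b 0
  have tz1 : ∀ b c, θ 0 b c = 0 := fun b c => by
    simpa using ts1 (0 : K) 0 b c
  have tz2 : ∀ a c, θ a 0 c = 0 := fun a c => by
    simpa using ts2 (0 : K) a 0 c
  have tz3 : ∀ a b, θ a b 0 = 0 := fun a b => by
    simpa using ts3 (0 : K) a b 0
  constructor
  · intro hT p q r
    obtain ⟨x, u⟩ := p; obtain ⟨y, v⟩ := q; obtain ⟨z, w⟩ := r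
    have hT' := hT u v w
    simp only [Dop, map_add, map_sub, map_smul] at hT'
    simp only [sdBr, Dop]
    rw [Prod.ext_iff]
    simp only [Prod.fst_add, Prod.snd_add, Prod.fst_sub, Prod.snd_sub]
    constructor
    · simp only [ba1, ba2, ba3, ta1, ta2, ta3, tz1, tz2, tz3, bz1, bz2, bz3,
        pz1, pz2, pz3, map_add, map_sub, map_zero, map_smul, map_neg, smul_zero,
        neg_add, add_zero, zero_add, sub_zero, zero_sub]
      rw [hT']
      abel
    · simp only [tz1, tz2, tz3, pz1, pz2, pz3, map_zero, smul_zero,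
        add_zero, zero_add, sub_zero, sub_self, zero_sub, neg_zero]
  · intro hN u v w
    have h := hN (0, u) (0, v) (0, w)
    rw [Prod.ext_iff] at h
    simp only [sdBr, Dop, Prod.fst_add, Prod.snd_add, Prod.fst_sub,
      Prod.snd_sub, zero_add, add_zero,
      tz1, tz2, tz3, pz1, pz2, pz3, bz1, bz2, bz3, map_zero, smul_zero,
      sub_zero, zero_sub, sub_self, neg_zero, map_add, map_sub, map_neg,
      map_smul] at h
    simp only [Dop, map_add, map_sub, map_smul]
    rw [h.1]
    abel
end

section
/- Let T: L' → L be a relative Rota-Baxter operator of weight λ with respect to an action θ. Define θ_T: L'×L' → End(L) by θ_T(u,v)x = [x,Tu,Tv]_L − T(D(x,Tu)v − θ(x,Tv)u). Then θ_T is a representation of the descendent Lie triple system (L',[·,·,·]_T) on the vector space L, with D_T(u,v)x = θ_T(v,u)x − θ_T(u,v)x = [Tu,Tv,x]_L − T(θ(Tv,x)u − θ(Tu,x)v). -/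
section TriAux
variable {K : Type*} [Field K] {A B C D : Type*}
    [AddCommGroup A] [Module K A] [AddCommGroup B] [Module K B]
    [AddCommGroup C] [Module K C] [AddCommGroup D] [Module K D]
    {f : A → B → C → D}

lemma IsTri.lin₁ (hf : IsTri K f) (b : B) (c : C) : IsLinearMap K (fun a => f a b c) :=
  ⟨fun x y => hf.1 x y b c, fun t x => hf.2.1 t x b c⟩
lemma IsTri.lin₂ (hf : IsTri K f) (a : A) (c : C) : IsLinearMap K (fun b => f a b c) :=
  ⟨fun x y => hf.2.2.1 a x y c, fun t x => hf.2.2.2.1 t a x c⟩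
lemma IsTri.lin₃ (hf : IsTri K f) (a : A) (b : B) : IsLinearMap K (fun c => f a b c) :=
  ⟨fun x y => hf.2.2.2.2.1 a b x y, fun t x => hf.2.2.2.2.2 t a b x⟩

lemma IsTri.sub₁ (hf : IsTri K f) (a a' b c) : f (a - a') b c = f a b c - f a' b c :=
  (hf.lin₁ b c).map_sub a a'
lemma IsTri.sub₂ (hf : IsTri K f) (a b b' c) : f a (b - b') c = f a b c - f a b' c :=
  (hf.lin₂ a c).map_sub b b'
lemma IsTri.sub₃ (hf : IsTri K f) (a b c c') : f a b (c - c') = f a b c - f a b c' :=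
  (hf.lin₃ a b).map_sub c c'
lemma IsTri.zero₁ (hf : IsTri K f) (b c) : f 0 b c = 0 := (hf.lin₁ b c).map_zero
lemma IsTri.zero₂ (hf : IsTri K f) (a c) : f a 0 c = 0 := (hf.lin₂ a c).map_zero
lemma IsTri.zero₃ (hf : IsTri K f) (a b) : f a b 0 = 0 := (hf.lin₃ a b).map_zero
lemma IsTri.neg₁ (hf : IsTri K f) (a b c) : f (-a) b c = - f a b c := (hf.lin₁ b c).map_neg a
lemma IsTri.neg₂ (hf : IsTri K f) (a b c) : f a (-b) c = - f a b c := (hf.lin₂ a c).map_neg b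
lemma IsTri.neg₃ (hf : IsTri K f) (a b c) : f a b (-c) = - f a b c := (hf.lin₃ a b).map_neg c
end TriAux

section LTSAux
variable {K : Type*} [Field K] {A : Type*} [AddCommGroup A] [Module K A]
  {br : A → A → A → A}

/-- antisymmetry in the first two slots -/
lemma IsLTS.antisym (h : IsLTS K br) (a b c : A) : br b a c = - br a b c := by
  have h0 := h.2.1 (a + b) c
  simp only [h.1.1, h.1.2.2.1] at h0
  rw [h.2.1, h.2.1] at h0
  linear_combination (norm := module) h0

lemma IsLTS.swap (h : IsLTS K br) (a b x : A) :
    br x b a - br x a b = br a b x := by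
  have h0 := h.2.2.1 x a b
  have h1 := h.antisym x b a
  linear_combination (norm := module) h1 - h0

/-- The regular representation identity (R1). -/
lemma IsLTS.reg1 (h : IsLTS K br) (x a b c d : A) :
    br (br x a b) c d - br (br x a c) b d - br x a (br b c d)
      + br b c (br x a d) = 0 := by
  have h0 := h.2.2.2 x a b c d
  have h1 := h.antisym b (br x a c) d
  linear_combination (norm := module) - h0 - h1
end LTSAux

section ActAux
variable {K : Type*} [Field K] {A C : Type*}
    [AddCommGroup A] [Module K A] [AddCommGroup C] [Module K C]
    {br : A → A → A → A} {br' : C → C → C → C} {θ : A → A → C → C}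

lemma IsAction.cent2 (hb : IsLTS K br') (h : IsAction K br br' θ) (x y u a b) :
    br' a (θ x y u) b = 0 := by
  rw [hb.antisym, h.2.1, neg_zero]

lemma IsAction.cent3 (hb : IsLTS K br') (h : IsAction K br br' θ) (x y u a b) :
    br' a b (θ x y u) = 0 := by
  have h0 := hb.2.2.1 a b (θ x y u)
  rw [h.2.1, IsAction.cent2 hb h] at h0
  linear_combination (norm := module) h0
end ActAux

lemma sd_lts {K : Type*} [Field K] {A C : Type*}
    [AddCommGroup A] [Module K A] [AddCommGroup C] [Module K C]
    {br : A → A → A → A} {br' : C → C → C → C} {θ : A → A → C → C}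
    (hL : IsLTS K br) (hL' : IsLTS K br') (hθ : IsAction K br br' θ) (lam : K) :
    IsLTS K (sdBr br br' θ lam) := by
  obtain ⟨⟨hθt, hrep1, hrep2⟩, hcent, hann⟩ := hθ
  have hc2 := IsAction.cent2 hL' ⟨⟨hθt, hrep1, hrep2⟩, hcent, hann⟩
  have hc3 := IsAction.cent3 hL' ⟨⟨hθt, hrep1, hrep2⟩, hcent, hann⟩
  have hbt := hL.1
  have hbt' := hL'.1
  refine ⟨⟨?_, ?_, ?_, ?_, ?_, ?_⟩, ?_, ?_, ?_⟩
  · intro p p' q r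
    refine Prod.ext ?_ ?_ <;>
      simp only [sdBr, Dop, Prod.fst_add, Prod.snd_add, hbt.1, hbt.2.2.1, hbt.2.2.2.2.1, hθt.1, hθt.2.2.1, hθt.2.2.2.2.1, hbt'.1, hbt'.2.2.1, hbt'.2.2.2.2.1] <;>
      module
  · intro t p q r
    refine Prod.ext ?_ ?_ <;>
      simp only [sdBr, Dop, Prod.smul_fst, Prod.smul_snd, hbt.2.1, hbt.2.2.2.1, hbt.2.2.2.2.2, hθt.2.1, hθt.2.2.2.1, hθt.2.2.2.2.2, hbt'.2.1, hbt'.2.2.2.1, hbt'.2.2.2.2.2] <;>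
      module
  · intro p q q' r
    refine Prod.ext ?_ ?_ <;>
      simp only [sdBr, Dop, Prod.fst_add, Prod.snd_add, hbt.1, hbt.2.2.1, hbt.2.2.2.2.1, hθt.1, hθt.2.2.1, hθt.2.2.2.2.1, hbt'.1, hbt'.2.2.1, hbt'.2.2.2.2.1] <;>
      module
  · intro t p q r
    refine Prod.ext ?_ ?_ <;>
      simp only [sdBr, Dop, Prod.smul_fst, Prod.smul_snd, hbt.2.1, hbt.2.2.2.1, hbt.2.2.2.2.2, hθt.2.1, hθt.2.2.2.1, hθt.2.2.2.2.2, hbt'.2.1, hbt'.2.2.2.1, hbt'.2.2.2.2.2] <;>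
      module
  · intro p q r r'
    refine Prod.ext ?_ ?_ <;>
      simp only [sdBr, Dop, Prod.fst_add, Prod.snd_add, hbt.1, hbt.2.2.1, hbt.2.2.2.2.1, hθt.1, hθt.2.2.1, hθt.2.2.2.2.1, hbt'.1, hbt'.2.2.1, hbt'.2.2.2.2.1] <;>
      module
  · intro t p q r
    refine Prod.ext ?_ ?_ <;>
      simp only [sdBr, Dop, Prod.smul_fst, Prod.smul_snd, hbt.2.1, hbt.2.2.2.1, hbt.2.2.2.2.2, hθt.2.1, hθt.2.2.2.1, hθt.2.2.2.2.2, hbt'.2.1, hbt'.2.2.2.1, hbt'.2.2.2.2.2] <;>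
      module
  · intro p q
    refine Prod.ext ?_ ?_
    · simpa [sdBr] using hL.2.1 p.1 q.1
    · have h1 := hL'.2.1 p.2 q.2
      simp only [sdBr, Dop, Prod.snd_zero]
      rw [h1]
      module
  · intro p q r
    refine Prod.ext ?_ ?_
    · simpa [sdBr] using hL.2.2.1 p.1 q.1 r.1
    · have h1 := hL'.2.2.1 p.2 q.2 r.2
      simp only [sdBr, Dop, Prod.fst_add, Prod.snd_add, Prod.fst_zero, Prod.snd_zero]
      linear_combination (norm := module) lam • h1
  · intro p q r s t
    obtain ⟨a, x⟩ := p; obtain ⟨b, y⟩ := q; obtain ⟨c, z⟩ := r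
    obtain ⟨d, w⟩ := s; obtain ⟨e, v⟩ := t
    have A1 := hrep2 a b d e z
    have A2 := hrep2 a b c e w
    have A3 := hrep1 b c d e x
    have A4 := hrep1 a c d e y
    have A5 := hrep2 a b c d v
    have A6 := hrep2 a b d c v
    have A7 := hL'.2.2.2 x y z w v
    simp only [Dop, hθt.sub₃] at A1 A2 A3 A4 A5 A6
    refine Prod.ext ?_ ?_
    · simpa [sdBr] using hL.2.2.2 a b c d e
    · simp only [sdBr, Dop, hθt.2.2.2.2.1, hθt.sub₃, hθt.2.2.2.2.2,
        hbt'.2.2.2.2.1, hbt'.sub₃, hbt'.2.2.2.2.2, hbt'.1, hbt'.sub₁, hbt'.2.1,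
        hbt'.2.2.1, hbt'.sub₂, hbt'.2.2.2.1, Prod.fst_add, Prod.snd_add,
        hann, hcent, hc2, hc3, smul_zero, add_zero, zero_add, sub_zero, zero_sub,
        neg_zero]
      linear_combination (norm := module) A2 - A1 - A3 + A4 + A5 - A6 + (lam * lam) • A7

/-- `θ_T` is a representation of the descendent Lie triple system
`(L', [·,·,·]_T)` on `L`, with `D_T(u,v)x = [Tu,Tv,x] - T(θ(Tv,x)u - θ(Tu,x)v)`. -/
theorem stmt9 {K : Type*} [Field K] [CharZero K]
    {L L' : Type*} [AddCommGroup L] [Module K L] [AddCommGroup L'] [Module K L']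
    (br : L → L → L → L) (br' : L' → L' → L' → L') (θ : L → L → L' → L')
    (hL : IsLTS K br) (hL' : IsLTS K br') (hθ : IsAction K br br' θ) (lam : K) (T : L' →ₗ[K] L) (hT : IsRRB K br br' θ lam T) :
    (∀ u v x, Dop (thetaT br θ T) u v x =
        br (T u) (T v) x - T (θ (T v) x u - θ (T u) x v)) ∧
      IsRep K (descBr br' θ lam T) (thetaT br θ T) := by
  obtain ⟨⟨hθt, hrep1, hrep2⟩, hcent, hann⟩ := hθ
  have hθ' : IsAction K br br' θ := ⟨⟨hθt, hrep1, hrep2⟩, hcent, hann⟩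
  have hE : IsLTS K (sdBr br br' θ lam) := sd_lts hL hL' hθ' lam
  have hbt := hL.1
  have hbt' := hL'.1
  set bE := sdBr br br' θ lam with hbEdef
  set P : L × L' →ₗ[K] L := LinearMap.fst K L L' - T ∘ₗ LinearMap.snd K L L' with hPdef
  set ι : L' → L × L' := fun u => (T u, u) with hιdef
  set j : L → L × L' := fun x => (x, 0) with hjdef
  have hP : ∀ p : L × L', P p = p.1 - T p.2 := fun p => rfl
  have PZ : ∀ s, P (ι s) = 0 := by
    intro s; rw [hP]; simp [hιdef]
  have key1 : ∀ u v w, bE (ι u) (ι v) (ι w) = ι (descBr br' θ lam T u v w) := by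
    intro u v w
    refine Prod.ext ?_ ?_
    · show br (T u) (T v) (T w) = T (descBr br' θ lam T u v w)
      rw [hT u v w]
      simp only [descBr, Dop, map_add, map_sub, map_smul]
      module
    · show Dop θ (T u) (T v) w + θ (T v) (T w) u - θ (T u) (T w) v
          + lam • br' u v w = descBr br' θ lam T u v w
      rfl
  have key2 : ∀ u v x, thetaT br θ T u v x = P (bE (j x) (ι u) (ι v)) := by
    intro u v x
    rw [hP]
    show thetaT br θ T u v x =
      br x (T u) (T v) - T (Dop θ x (T u) v + θ (T u) (T v) (0:L') - θ x (T v) u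
        + lam • br' (0:L') u v)
    simp only [thetaT, Dop, hθt.zero₃, hbt'.zero₁, smul_zero, add_zero, map_add,
      map_sub, map_smul, map_zero]
  have hj : ∀ p : L × L', j (P p) = p - ι p.2 := by
    intro p
    rw [hP]
    refine Prod.ext ?_ ?_ <;> simp [hjdef, hιdef]
  have key3 : ∀ (p : L × L') u v,
      P (bE (j (P p)) (ι u) (ι v)) = P (bE p (ι u) (ι v)) := by
    intro p u v
    rw [hj, hE.1.sub₁, map_sub, key1, PZ, sub_zero]
  have key3' : ∀ (p : L × L') u v,
      P (bE (ι u) (ι v) (j (P p))) = P (bE (ι u) (ι v) p) := by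
    intro p u v
    rw [hj, hE.1.sub₃, map_sub, key1, PZ, sub_zero]
  have keyswap : ∀ u v x, Dop (thetaT br θ T) u v x = P (bE (ι u) (ι v) (j x)) := by
    intro u v x
    have hs := hE.swap (ι u) (ι v) (j x)
    rw [Dop, key2, key2, ← map_sub, hs]
  refine ⟨?_, ⟨?_, ?_, ?_, ?_, ?_, ?_⟩, ?_, ?_⟩
  · -- the Dop formula
    intro u v x
    rw [keyswap]
    rw [hP]
    show br (T u) (T v) x - T (Dop θ (T u) (T v) (0:L') + θ (T v) x u - θ (T u) x v
        + lam • br' u v (0:L')) =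
      br (T u) (T v) x - T (θ (T v) x u - θ (T u) x v)
    simp only [Dop, hθt.zero₃, hbt'.zero₃, smul_zero, add_zero, sub_self, zero_add]
  · intro a a' b c
    simp only [thetaT, Dop, map_add, map_sub, hbt.1, hbt.2.2.1, hbt.2.2.2.2.1,
      hθt.1, hθt.2.2.1, hθt.2.2.2.2.1]
    module
  · intro t a b c
    simp only [thetaT, Dop, map_smul, map_sub, hbt.2.1, hbt.2.2.2.1, hbt.2.2.2.2.2,
      hθt.2.1, hθt.2.2.2.1, hθt.2.2.2.2.2]
    module
  · intro a b b' c
    simp only [thetaT, Dop, map_add, map_sub, hbt.1, hbt.2.2.1, hbt.2.2.2.2.1,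
      hθt.1, hθt.2.2.1, hθt.2.2.2.2.1]
    module
  · intro t a b c
    simp only [thetaT, Dop, map_smul, map_sub, hbt.2.1, hbt.2.2.2.1, hbt.2.2.2.2.2,
      hθt.2.1, hθt.2.2.2.1, hθt.2.2.2.2.2]
    module
  · intro a b c c'
    simp only [thetaT, Dop, map_add, map_sub, hbt.1, hbt.2.2.1, hbt.2.2.2.2.1,
      hθt.1, hθt.2.2.1, hθt.2.2.2.2.1]
    module
  · intro t a b c
    simp only [thetaT, Dop, map_smul, map_sub, hbt.2.1, hbt.2.2.2.1, hbt.2.2.2.2.2,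
      hθt.2.1, hθt.2.2.2.1, hθt.2.2.2.2.2]
    module
  · -- rep identity 1
    intro a b c d x
    have e1 : thetaT br θ T c d (thetaT br θ T a b x)
        = P (bE (bE (j x) (ι a) (ι b)) (ι c) (ι d)) := by
      rw [key2, key2, key3]
    have e2 : thetaT br θ T b d (thetaT br θ T a c x)
        = P (bE (bE (j x) (ι a) (ι c)) (ι b) (ι d)) := by
      rw [key2, key2, key3]
    have e3 : thetaT br θ T a (descBr br' θ lam T b c d) x
        = P (bE (j x) (ι a) (bE (ι b) (ι c) (ι d))) := by
      rw [key2, key1]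
    have e4 : Dop (thetaT br θ T) b c (thetaT br θ T a d x)
        = P (bE (ι b) (ι c) (bE (j x) (ι a) (ι d))) := by
      rw [keyswap, key2, key3']
    rw [e1, e2, e3, e4, ← map_sub, ← map_sub, ← map_add,
      hE.reg1 (j x) (ι a) (ι b) (ι c) (ι d), map_zero]
  · -- rep identity 2
    intro a b c d x
    have e1 : thetaT br θ T c d (Dop (thetaT br θ T) a b x)
        = P (bE (bE (ι a) (ι b) (j x)) (ι c) (ι d)) := by
      rw [keyswap, key2, key3]
    have e2 : Dop (thetaT br θ T) a b (thetaT br θ T c d x)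
        = P (bE (ι a) (ι b) (bE (j x) (ι c) (ι d))) := by
      rw [key2, keyswap, key3']
    have e3 : thetaT br θ T (descBr br' θ lam T a b c) d x
        = P (bE (j x) (bE (ι a) (ι b) (ι c)) (ι d)) := by
      rw [key2, key1]
    have e4 : thetaT br θ T c (descBr br' θ lam T a b d) x
        = P (bE (j x) (ι c) (bE (ι a) (ι b) (ι d))) := by
      rw [key2, key1]
    have h0 := hE.2.2.2 (ι a) (ι b) (j x) (ι c) (ι d)
    rw [e1, e2, e3, e4, ← map_sub, ← map_add, ← map_add,
      show bE (bE (ι a) (ι b) (j x)) (ι c) (ι d) - bE (ι a) (ι b) (bE (j x) (ι c) (ι d))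
          + bE (j x) (bE (ι a) (ι b) (ι c)) (ι d) + bE (j x) (ι c) (bE (ι a) (ι b) (ι d))
        = 0 from by rw [h0]; abel, map_zero]
end

section
/- Let T: L' → L be a relative Rota-Baxter operator of weight λ with respect to an action θ. For any X ∈ L∧L, the linear map δ_T(X): L' → L defined by δ_T(X)v = T(D(X)v) − [X, Tv]_L (where for X = x∧y, D(X) = D(x,y) and [X,Tv] = [x,y,Tv]_L) is a 1-cocycle of the descendent Lie triple system (L',[·,·,·]_T) with coefficients in the representation (L, θ_T); that is, ∂_T(δ_T(X)) = 0. -/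

private lemma hom_sub' {A B : Type*} [AddCommGroup A] [AddCommGroup B]
    (f : A → B) (h : ∀ a a', f (a + a') = f a + f a') (a a' : A) :
    f (a - a') = f a - f a' := by
  have h0 : f 0 = 0 := by
    have h1 := h 0 0
    rw [add_zero] at h1
    exact left_eq_add.mp h1
  have hn : f (-a') = - f a' := by
    have h1 := h a' (-a')
    rw [add_neg_cancel, h0] at h1
    exact (neg_eq_of_add_eq_zero_right h1.symm).symm
  rw [sub_eq_add_neg, h, hn, ← sub_eq_add_neg]

/-- for `X = x ∧ y ∈ L ∧ L`, the map `δ_T(X) v = T(D(X)v) - [X, Tv]`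
is a 1-cocycle of the descendent Lie triple system with coefficients in `(L, θ_T)`. -/
theorem stmt10 {K : Type*} [Field K] [CharZero K]
    {L L' : Type*} [AddCommGroup L] [Module K L] [AddCommGroup L'] [Module K L']
    (br : L → L → L → L) (br' : L' → L' → L' → L') (θ : L → L → L' → L')
    (hL : IsLTS K br) (hL' : IsLTS K br') (hθ : IsAction K br br' θ) (lam : K) (T : L' →ₗ[K] L) (hT : IsRRB K br br' θ lam T)
    (x y : L) :
    ∀ v₁ v₂ v₃ : L',
      thetaT br θ T v₂ v₃ (T (Dop θ x y v₁) - br x y (T v₁))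
        - thetaT br θ T v₁ v₃ (T (Dop θ x y v₂) - br x y (T v₂))
        + Dop (thetaT br θ T) v₁ v₂ (T (Dop θ x y v₃) - br x y (T v₃))
        - (T (Dop θ x y (descBr br' θ lam T v₁ v₂ v₃))
            - br x y (T (descBr br' θ lam T v₁ v₂ v₃))) = 0 := by
  obtain ⟨⟨hb1, hb2, hb3, hb4, hb5, hb6⟩, balt, bcyc, bder⟩ := hL
  obtain ⟨⟨⟨ht1, ht2, ht3, ht4, ht5, ht6⟩, hR1, hR2⟩, act1, act2⟩ := hθ
  have hbs1 : ∀ a a' b c, br (a - a') b c = br a b c - br a' b c :=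
    fun a a' b c => hom_sub' (fun z => br z b c) (fun u u' => hb1 u u' b c) a a'
  have hbs3 : ∀ a b b' c, br a (b - b') c = br a b c - br a b' c :=
    fun a b b' c => hom_sub' (fun z => br a z c) (fun u u' => hb3 a u u' c) b b'
  have hbs5 : ∀ a b c c', br a b (c - c') = br a b c - br a b c' :=
    fun a b c c' => hom_sub' (fun z => br a b z) (fun u u' => hb5 a b u u') c c'
  have hts1 : ∀ a a' b c, θ (a - a') b c = θ a b c - θ a' b c :=
    fun a a' b c => hom_sub' (fun z => θ z b c) (fun u u' => ht1 u u' b c) a a'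
  have hts3 : ∀ a b b' c, θ a (b - b') c = θ a b c - θ a b' c :=
    fun a b b' c => hom_sub' (fun z => θ a z c) (fun u u' => ht3 a u u' c) b b'
  have hts5 : ∀ a b c c', θ a b (c - c') = θ a b c - θ a b c' :=
    fun a b c c' => hom_sub' (fun z => θ a b z) (fun u u' => ht5 a b u u') c c'
  have bskew : ∀ a b c, br a b c + br b a c = 0 := by
    intro a b c
    have h := balt (a + b) c
    simp only [hb1, hb3, balt, zero_add, add_zero] at h
    rw [← h] <;> abel
  intro v₁ v₂ v₃
  have h0' : T (descBr br' θ lam T v₁ v₂ v₃) = br (T v₁) (T v₂) (T v₃) := by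
    rw [show descBr br' θ lam T v₁ v₂ v₃
        = Dop θ (T v₁) (T v₂) v₃ - θ (T v₁) (T v₃) v₂ + θ (T v₂) (T v₃) v₁
          + lam • br' v₁ v₂ v₃ by simp only [descBr]; abel]
    exact (hT v₁ v₂ v₃).symm
  rw [h0']
  simp only [thetaT, descBr, Dop, map_add, map_sub, map_smul,
    hb1, hb3, hb5, hbs1, hbs3, hbs5, ht1, ht3, ht5, ht6, hts1, hts3, hts5,
    act1, act2, smul_zero, map_zero, sub_zero, add_zero, zero_add, zero_sub, neg_zero]
  have z_rrb_yx_123 : T (θ (T (θ y x v₁)) (T v₂) v₃) + T (θ (T (θ y x v₁)) (T v₃) v₂) - T (θ (T v₂) (T (θ y x v₁)) v₃) - T (θ (T v₂) (T v₃) (θ y x v₁)) + br (T (θ y x v₁)) (T v₂) (T v₃) = 0 := by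
    have h := sub_eq_zero_of_eq (hT (θ y x v₁) v₂ v₃)
    simp only [Dop, map_add, map_sub, map_smul, act1, smul_zero, add_zero, hts1, hts3, hts5, ht1, ht3, ht5] at h
    rw [← h] <;> abel
  have z_rrb_xy_123 : T (θ (T (θ x y v₁)) (T v₂) v₃) + T (θ (T (θ x y v₁)) (T v₃) v₂) - T (θ (T v₂) (T (θ x y v₁)) v₃) - T (θ (T v₂) (T v₃) (θ x y v₁)) + br (T (θ x y v₁)) (T v₂) (T v₃) = 0 := by
    have h := sub_eq_zero_of_eq (hT (θ x y v₁) v₂ v₃)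
    simp only [Dop, map_add, map_sub, map_smul, act1, smul_zero, add_zero, hts1, hts3, hts5, ht1, ht3, ht5] at h
    rw [← h] <;> abel
  have z_rrb_yx_213 : T (θ (T (θ y x v₂)) (T v₁) v₃) + T (θ (T (θ y x v₂)) (T v₃) v₁) - T (θ (T v₁) (T (θ y x v₂)) v₃) - T (θ (T v₁) (T v₃) (θ y x v₂)) + br (T (θ y x v₂)) (T v₁) (T v₃) = 0 := by
    have h := sub_eq_zero_of_eq (hT (θ y x v₂) v₁ v₃)
    simp only [Dop, map_add, map_sub, map_smul, act1, smul_zero, add_zero, hts1, hts3, hts5, ht1, ht3, ht5] at h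
    rw [← h] <;> abel
  have z_rrb_xy_213 : T (θ (T (θ x y v₂)) (T v₁) v₃) + T (θ (T (θ x y v₂)) (T v₃) v₁) - T (θ (T v₁) (T (θ x y v₂)) v₃) - T (θ (T v₁) (T v₃) (θ x y v₂)) + br (T (θ x y v₂)) (T v₁) (T v₃) = 0 := by
    have h := sub_eq_zero_of_eq (hT (θ x y v₂) v₁ v₃)
    simp only [Dop, map_add, map_sub, map_smul, act1, smul_zero, add_zero, hts1, hts3, hts5, ht1, ht3, ht5] at h
    rw [← h] <;> abel
  have z_rrb_yx_321 : T (θ (T (θ y x v₃)) (T v₁) v₂) + T (θ (T (θ y x v₃)) (T v₂) v₁) - T (θ (T v₂) (T (θ y x v₃)) v₁) - T (θ (T v₂) (T v₁) (θ y x v₃)) + br (T (θ y x v₃)) (T v₂) (T v₁) = 0 := by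
    have h := sub_eq_zero_of_eq (hT (θ y x v₃) v₂ v₁)
    simp only [Dop, map_add, map_sub, map_smul, act1, smul_zero, add_zero, hts1, hts3, hts5, ht1, ht3, ht5] at h
    rw [← h] <;> abel
  have z_rrb_xy_321 : T (θ (T (θ x y v₃)) (T v₁) v₂) + T (θ (T (θ x y v₃)) (T v₂) v₁) - T (θ (T v₂) (T (θ x y v₃)) v₁) - T (θ (T v₂) (T v₁) (θ x y v₃)) + br (T (θ x y v₃)) (T v₂) (T v₁) = 0 := by
    have h := sub_eq_zero_of_eq (hT (θ x y v₃) v₂ v₁)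
    simp only [Dop, map_add, map_sub, map_smul, act1, smul_zero, add_zero, hts1, hts3, hts5, ht1, ht3, ht5] at h
    rw [← h] <;> abel
  have z_rrb_yx_312 : T (θ (T (θ y x v₃)) (T v₁) v₂) + T (θ (T (θ y x v₃)) (T v₂) v₁) - T (θ (T v₁) (T (θ y x v₃)) v₂) - T (θ (T v₁) (T v₂) (θ y x v₃)) + br (T (θ y x v₃)) (T v₁) (T v₂) = 0 := by
    have h := sub_eq_zero_of_eq (hT (θ y x v₃) v₁ v₂)
    simp only [Dop, map_add, map_sub, map_smul, act1, smul_zero, add_zero, hts1, hts3, hts5, ht1, ht3, ht5] at h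
    rw [← h] <;> abel
  have z_rrb_xy_312 : T (θ (T (θ x y v₃)) (T v₁) v₂) + T (θ (T (θ x y v₃)) (T v₂) v₁) - T (θ (T v₁) (T (θ x y v₃)) v₂) - T (θ (T v₁) (T v₂) (θ x y v₃)) + br (T (θ x y v₃)) (T v₁) (T v₂) = 0 := by
    have h := sub_eq_zero_of_eq (hT (θ x y v₃) v₁ v₂)
    simp only [Dop, map_add, map_sub, map_smul, act1, smul_zero, add_zero, hts1, hts3, hts5, ht1, ht3, ht5] at h
    rw [← h] <;> abel
  have z_der : -br (T v₁) (T v₂) (br x y (T v₃)) - br (T v₁) (br x y (T v₂)) (T v₃) - br (br x y (T v₁)) (T v₂) (T v₃) + br x y (br (T v₁) (T v₂) (T v₃)) = 0 := by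
    have h := sub_eq_zero_of_eq (bder x y (T v₁) (T v₂) (T v₃))
    rw [← h] <;> abel
  have z_sk1 : br (T v₁) (br x y (T v₂)) (T v₃) + br (br x y (T v₂)) (T v₁) (T v₃) = 0 := by
    have h := bskew (T v₁) (br x y (T v₂)) (T v₃)
    rw [← h] <;> abel
  have z_sk2 : br (T v₂) (br x y (T v₃)) (T v₁) + br (br x y (T v₃)) (T v₂) (T v₁) = 0 := by
    have h := bskew (br x y (T v₃)) (T v₂) (T v₁)
    rw [← h] <;> abel
  have z_cyc1 : br (T v₁) (T v₂) (br x y (T v₃)) + br (T v₂) (br x y (T v₃)) (T v₁) + br (br x y (T v₃)) (T v₁) (T v₂) = 0 := by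
    have h := bcyc (T v₁) (T v₂) (br x y (T v₃))
    rw [← h] <;> abel
  have z_tR2_23_1 : -T (θ (T v₂) (T v₃) (θ x y v₁)) + T (θ (T v₂) (T v₃) (θ y x v₁)) + T (θ (T v₂) (br x y (T v₃)) v₁) + T (θ (br x y (T v₂)) (T v₃) v₁) + T (θ x y (θ (T v₂) (T v₃) v₁)) - T (θ y x (θ (T v₂) (T v₃) v₁)) = 0 := by
    have h := congrArg T (hR2 x y (T v₂) (T v₃) v₁)
    simp only [Dop, map_add, map_sub, map_zero, ht1, ht3, ht5, hts1, hts3, hts5] at h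
    rw [← h] <;> abel
  have z_tR2_13_2 : -T (θ (T v₁) (T v₃) (θ x y v₂)) + T (θ (T v₁) (T v₃) (θ y x v₂)) + T (θ (T v₁) (br x y (T v₃)) v₂) + T (θ (br x y (T v₁)) (T v₃) v₂) + T (θ x y (θ (T v₁) (T v₃) v₂)) - T (θ y x (θ (T v₁) (T v₃) v₂)) = 0 := by
    have h := congrArg T (hR2 x y (T v₁) (T v₃) v₂)
    simp only [Dop, map_add, map_sub, map_zero, ht1, ht3, ht5, hts1, hts3, hts5] at h
    rw [← h] <;> abel
  have z_tR2_12_3 : -T (θ (T v₁) (T v₂) (θ x y v₃)) + T (θ (T v₁) (T v₂) (θ y x v₃)) + T (θ (T v₁) (br x y (T v₂)) v₃) + T (θ (br x y (T v₁)) (T v₂) v₃) + T (θ x y (θ (T v₁) (T v₂) v₃)) - T (θ y x (θ (T v₁) (T v₂) v₃)) = 0 := by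
    have h := congrArg T (hR2 x y (T v₁) (T v₂) v₃)
    simp only [Dop, map_add, map_sub, map_zero, ht1, ht3, ht5, hts1, hts3, hts5] at h
    rw [← h] <;> abel
  have z_tR2_21_3 : -T (θ (T v₂) (T v₁) (θ x y v₃)) + T (θ (T v₂) (T v₁) (θ y x v₃)) + T (θ (T v₂) (br x y (T v₁)) v₃) + T (θ (br x y (T v₂)) (T v₁) v₃) + T (θ x y (θ (T v₂) (T v₁) v₃)) - T (θ y x (θ (T v₂) (T v₁) v₃)) = 0 := by
    have h := congrArg T (hR2 x y (T v₂) (T v₁) v₃)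
    simp only [Dop, map_add, map_sub, map_zero, ht1, ht3, ht5, hts1, hts3, hts5] at h
    rw [← h] <;> abel
  trans ((T (θ (T (θ y x v₁)) (T v₂) v₃) + T (θ (T (θ y x v₁)) (T v₃) v₂) - T (θ (T v₂) (T (θ y x v₁)) v₃) - T (θ (T v₂) (T v₃) (θ y x v₁)) + br (T (θ y x v₁)) (T v₂) (T v₃)) - (T (θ (T (θ x y v₁)) (T v₂) v₃) + T (θ (T (θ x y v₁)) (T v₃) v₂) - T (θ (T v₂) (T (θ x y v₁)) v₃) - T (θ (T v₂) (T v₃) (θ x y v₁)) + br (T (θ x y v₁)) (T v₂) (T v₃)) - (T (θ (T (θ y x v₂)) (T v₁) v₃) + T (θ (T (θ y x v₂)) (T v₃) v₁) - T (θ (T v₁) (T (θ y x v₂)) v₃) - T (θ (T v₁) (T v₃) (θ y x v₂)) + br (T (θ y x v₂)) (T v₁) (T v₃)) + (T (θ (T (θ x y v₂)) (T v₁) v₃) + T (θ (T (θ x y v₂)) (T v₃) v₁) - T (θ (T v₁) (T (θ x y v₂)) v₃) - T (θ (T v₁) (T v₃) (θ x y v₂)) + br (T (θ x y v₂)) (T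 v₁) (T v₃)) + (T (θ (T (θ y x v₃)) (T v₁) v₂) + T (θ (T (θ y x v₃)) (T v₂) v₁) - T (θ (T v₂) (T (θ y x v₃)) v₁) - T (θ (T v₂) (T v₁) (θ y x v₃)) + br (T (θ y x v₃)) (T v₂) (T v₁)) - (T (θ (T (θ x y v₃)) (T v₁) v₂) + T (θ (T (θ x y v₃)) (T v₂) v₁) - T (θ (T v₂) (T (θ x y v₃)) v₁) - T (θ (T v₂) (T v₁) (θ x y v₃)) + br (T (θ x y v₃)) (T v₂) (T v₁)) - (T (θ (T (θ y x v₃)) (T v₁) v₂) + T (θ (T (θ y x v₃)) (T v₂) v₁) - T (θ (T v₁) (T (θ y x v₃)) v₂) - T (θ (T v₁) (T v₂) (θ y x v₃)) + br (T (θ y x v₃)) (T v₁) (T v₂)) + (T (θ (T (θ x y v₃)) (T v₁) v₂) + T (θ (T (θ x y v₃)) (T v₂) v₁) - T (θ (T v₁) (T (θ x y v₃)) v₂) - T (θ (T v₁) (T v₂) (θ x y v₃)) + br (T (θ x y v₃)) (T v₁) (T v₂)) + (-br (T v₁) (T v₂) (br x y (T v₃)) - br (T v₁) (br x y (T v₂))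 (T v₃) - br (br x y (T v₁)) (T v₂) (T v₃) + br x y (br (T v₁) (T v₂) (T v₃))) + (br (T v₁) (br x y (T v₂)) (T v₃) + br (br x y (T v₂)) (T v₁) (T v₃)) - (br (T v₂) (br x y (T v₃)) (T v₁) + br (br x y (T v₃)) (T v₂) (T v₁)) + (br (T v₁) (T v₂) (br x y (T v₃)) + br (T v₂) (br x y (T v₃)) (T v₁) + br (br x y (T v₃)) (T v₁) (T v₂)) + (-T (θ (T v₂) (T v₃) (θ x y v₁)) + T (θ (T v₂) (T v₃) (θ y x v₁)) + T (θ (T v₂) (br x y (T v₃)) v₁) + T (θ (br x y (T v₂)) (T v₃) v₁) + T (θ x y (θ (T v₂) (T v₃) v₁)) - T (θ y x (θ (T v₂) (T v₃) v₁))) - (-T (θ (T v₁) (T v₃) (θ x y v₂)) + T (θ (T v₁) (T v₃) (θ y x v₂)) + T (θ (T v₁) (br x y (T v₃)) v₂) + T (θ (br x y (T v₁)) (T v₃) v₂) + T (θ x y (θ (T v₁) (T v₃) v₂)) - T (θ y x (θ (T v₁) (T v₃) v₂))) - (-T (θ (T v₁) (T v₂) (θ x y v₃)) + T (θ (T v₁)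 (T v₂) (θ y x v₃)) + T (θ (T v₁) (br x y (T v₂)) v₃) + T (θ (br x y (T v₁)) (T v₂) v₃) + T (θ x y (θ (T v₁) (T v₂) v₃)) - T (θ y x (θ (T v₁) (T v₂) v₃))) + (-T (θ (T v₂) (T v₁) (θ x y v₃)) + T (θ (T v₂) (T v₁) (θ y x v₃)) + T (θ (T v₂) (br x y (T v₁)) v₃) + T (θ (br x y (T v₂)) (T v₁) v₃) + T (θ x y (θ (T v₂) (T v₁) v₃)) - T (θ y x (θ (T v₂) (T v₁) v₃))))
  · abel
  · rw [z_rrb_yx_123, z_rrb_xy_123, z_rrb_yx_213, z_rrb_xy_213, z_rrb_yx_321, z_rrb_xy_321, z_rrb_yx_312, z_rrb_xy_312, z_der, z_sk1, z_sk2, z_cyc1, z_tR2_23_1, z_tR2_13_2, z_tR2_12_3, z_tR2_21_3]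
    abel
end

section
/- Let T be a relative Rota-Baxter operator of weight λ and let T_t = T + tT₁ for a linear map T₁: L' → L. If T_t is a relative Rota-Baxter operator of weight λ for all t, then T₁ satisfies the 1-cocycle condition: [T₁u,Tv,Tw] + [Tu,T₁v,Tw] + [Tu,Tv,T₁w] = T(θ(Tv,T₁w)u − θ(Tu,T₁w)v + D(T₁u,Tv)w + θ(T₁v,Tw)u − θ(T₁u,Tw)v + D(Tu,T₁v)w) + T₁(D(Tu,Tv)w + θ(Tv,Tw)u − θ(Tu,Tw)v + λ[u,v,w]_{L'}) for all u,v,w ∈ L'. -/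
theorem coeff1_of_cubic {K : Type*} [Field K] [CharZero K] {L : Type*}
    [AddCommGroup L] [Module K L] (a0 a1 a2 a3 : L)
    (h : ∀ t : K, a0 + t • a1 + (t*t) • a2 + (t*t*t) • a3 = 0) : a1 = 0 := by
  have k0 := h 0
  have k1 := h 1
  have k2 := h (-1)
  have k3 := h 2
  have h6 : (6:K) • a1 = 0 := by
    linear_combination (norm := module) (6:K) • k1 - (2:K) • k2 - k3 - (3:K) • k0
  rcases smul_eq_zero.mp h6 with h | h
  · exact absurd h (by norm_num)
  · exact h

/-- if `T + t T₁` is a relative Rota-Baxter operator of weight `λ` for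
all `t`, then `T₁` satisfies the 1-cocycle condition. -/
theorem stmt11 {K : Type*} [Field K] [CharZero K]
    {L L' : Type*} [AddCommGroup L] [Module K L] [AddCommGroup L'] [Module K L']
    (br : L → L → L → L) (br' : L' → L' → L' → L') (θ : L → L → L' → L')
    (hL : IsLTS K br) (hL' : IsLTS K br') (hθ : IsAction K br br' θ) (lam : K) (T T₁ : L' →ₗ[K] L)
    (hT : IsRRB K br br' θ lam T)
    (hdef : ∀ t : K, IsRRB K br br' θ lam (T + t • T₁)) :
    ∀ u v w, br (T₁ u) (T v) (T w) + br (T u) (T₁ v) (T w) + br (T u) (T v) (T₁ w)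
      = T (θ (T v) (T₁ w) u - θ (T u) (T₁ w) v + Dop θ (T₁ u) (T v) w
          + θ (T₁ v) (T w) u - θ (T₁ u) (T w) v + Dop θ (T u) (T₁ v) w)
        + T₁ (Dop θ (T u) (T v) w + θ (T v) (T w) u - θ (T u) (T w) v
          + lam • br' u v w) := by
  intro u v w
  obtain ⟨⟨ba1, bs1, ba2, bs2, ba3, bs3⟩, -, -, -⟩ := hL
  obtain ⟨⟨⟨ta1, ts1, ta2, ts2, ta3, ts3⟩, -, -⟩, -, -⟩ := hθ
  have key : ∀ t : K,
      (br (T u) (T v) (T w)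
        - T (θ (T v) (T u) w) + T (θ (T u) (T v) w) + T (θ (T u) (T w) v)
        - T (θ (T v) (T w) u) - lam • T (br' u v w))
      + t • ((br (T₁ u) (T v) (T w) + br (T u) (T₁ v) (T w) + br (T u) (T v) (T₁ w))
        - T (θ (T v) (T₁ u) w) - T (θ (T₁ v) (T u) w) + T (θ (T₁ u) (T v) w)
        + T (θ (T u) (T₁ v) w) + T (θ (T₁ u) (T w) v) + T (θ (T u) (T₁ w) v)
        - T (θ (T₁ v) (T w) u) - T (θ (T v) (T₁ w) u)
        - T₁ (θ (T v) (T u) w) + T₁ (θ (T u) (T v) w) + T₁ (θ (T u) (T w) v)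
        - T₁ (θ (T v) (T w) u) - lam • T₁ (br' u v w))
      + (t*t) • ((br (T₁ u) (T₁ v) (T w) + br (T₁ u) (T v) (T₁ w) + br (T u) (T₁ v) (T₁ w))
        - T (θ (T₁ v) (T₁ u) w) + T (θ (T₁ u) (T₁ v) w) + T (θ (T₁ u) (T₁ w) v)
        - T (θ (T₁ v) (T₁ w) u)
        - T₁ (θ (T v) (T₁ u) w) - T₁ (θ (T₁ v) (T u) w) + T₁ (θ (T₁ u) (T v) w)
        + T₁ (θ (T u) (T₁ v) w) + T₁ (θ (T₁ u) (T w) v) + T₁ (θ (T u) (T₁ w) v)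
        - T₁ (θ (T₁ v) (T w) u) - T₁ (θ (T v) (T₁ w) u))
      + (t*t*t) • (br (T₁ u) (T₁ v) (T₁ w)
        - T₁ (θ (T₁ v) (T₁ u) w) + T₁ (θ (T₁ u) (T₁ v) w) + T₁ (θ (T₁ u) (T₁ w) v)
        - T₁ (θ (T₁ v) (T₁ w) u)) = 0 := by
    intro t
    have h := hdef t u v w
    simp only [Dop, LinearMap.add_apply, LinearMap.smul_apply, ba1, bs1, ba2, bs2, ba3, bs3,
      ta1, ts1, ta2, ts2, map_add, map_sub, map_smul] at h
    linear_combination (norm := module) h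
  have h1 := coeff1_of_cubic _ _ _ _ key
  have h0 := hT u v w
  simp only [Dop, map_add, map_sub, map_smul] at h0 ⊢
  linear_combination (norm := module) h1
end

section
/- Let T be a relative Rota-Baxter operator of weight λ. If two infinitesimal deformations T_t¹ = T + tT₁ and T_t² = T + tT₂ are equivalent via some X ∈ L∧L (i.e., (id_L + t[X,−], id_{L'} + tD(X)) is a homomorphism from T_t¹ to T_t²), then T₁(u) − T₂(u) = T(D(X)u) − [X, Tu]_L for all u ∈ L'; consequently T₁ and T₂ define the same class in the first cohomology group H¹_T(L',L). -/
/-- if the infinitesimal deformations `T + tT₁` and `T + tT₂` are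
equivalent via `X = x ∧ y` (the pair `(id + t[X,-], id + tD(X))` is a homomorphism
from `T + tT₁` to `T + tT₂` for all `t`), then `T₁ u - T₂ u = T(D(X)u) - [X, Tu]`,
i.e. `T₁ - T₂ = δ_T(X)` is a coboundary, so `T₁` and `T₂` have the same class in
`H¹_T(L',L)`. -/
theorem stmt12 {K : Type*} [Field K] [CharZero K]
    {L L' : Type*} [AddCommGroup L] [Module K L] [AddCommGroup L'] [Module K L']
    (br : L → L → L → L) (br' : L' → L' → L' → L') (θ : L → L → L' → L')
    (hL : IsLTS K br) (hL' : IsLTS K br') (hθ : IsAction K br br' θ) (lam : K) (T T₁ T₂ : L' →ₗ[K] L)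
    (hT : IsRRB K br br' θ lam T)
    (hd1 : ∀ t : K, IsRRB K br br' θ lam (T + t • T₁))
    (hd2 : ∀ t : K, IsRRB K br br' θ lam (T + t • T₂))
    (x y : L)
    (hhomL : ∀ (t : K) (a b c : L),
      br a b c + t • br x y (br a b c)
        = br (a + t • br x y a) (b + t • br x y b) (c + t • br x y c))
    (hhomL' : ∀ (t : K) (u v w : L'),
      br' u v w + t • Dop θ x y (br' u v w)
        = br' (u + t • Dop θ x y u) (v + t • Dop θ x y v) (w + t • Dop θ x y w))
    (hmain : ∀ (t : K) (u : L'),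
      (T u + t • T₁ u) + t • br x y (T u + t • T₁ u)
        = T (u + t • Dop θ x y u) + t • T₂ (u + t • Dop θ x y u))
    (hθcomp : ∀ (t : K) (a b : L) (u : L'),
      θ a b u + t • Dop θ x y (θ a b u)
        = θ (a + t • br x y a) (b + t • br x y b) (u + t • Dop θ x y u))
    (hDcomp : ∀ (t : K) (a b : L) (u : L'),
      Dop θ a b u + t • Dop θ x y (Dop θ a b u)
        = Dop θ (a + t • br x y a) (b + t • br x y b) (u + t • Dop θ x y u)) :
    ∀ u, T₁ u - T₂ u = T (Dop θ x y u) - br x y (T u) := by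
  intro u
  have hbadd : ∀ a b : L, br x y (a + b) = br x y a + br x y b :=
    fun a b => hL.1.2.2.2.2.1 x y a b
  have hbsmul : ∀ (t : K) (a : L), br x y (t • a) = t • br x y a :=
    fun t a => hL.1.2.2.2.2.2 t x y a
  have e1 := hmain 1 u
  have e2 := hmain (-1) u
  have hbneg : ∀ a : L, br x y (-a) = -br x y a := by
    intro a
    have := hbsmul (-1) a
    simpa using this
  simp only [one_smul, neg_smul, neg_neg, hbadd, hbsmul, hbneg, map_add, map_smul, map_sub,
    map_neg, smul_add, smul_neg, smul_sub] at e1 e2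
  set a := T₁ u
  set b := T₂ u
  set c := T (Dop θ x y u)
  set d := br x y (T u)
  set p := br x y a
  set q := T₂ (Dop θ x y u)
  have h : ((T u + a) + (d + p)) - ((T u + -a) + (-d + p))
      = ((T u + c) + (b + q)) - ((T u + -c) + (-b + q)) := by
    rw [e1, e2]
  have hz : (2 : K) • ((a - b) - (c - d)) = 0 := by
    have h2 : (2 : K) • ((a - b) - (c - d))
        = (((T u + a) + (d + p)) - ((T u + -a) + (-d + p)))
          - (((T u + c) + (b + q)) - ((T u + -c) + (-b + q))) := by
      module
    rw [h2, h, sub_self]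
  rcases smul_eq_zero.mp hz with h0 | h0
  · exact absurd h0 two_ne_zero
  · exact sub_eq_zero.mp h0
end

section
/- Let T and T' be relative Rota-Baxter operators of weight λ from L' to L with respect to an action θ, and let (ψ_L, ψ_{L'}) be a homomorphism from T to T'. Then ψ_{L'} is a Lie triple system homomorphism from the descendent Lie triple system (L',[·,·,·]_T) to (L',[·,·,·]_{T'}), i.e., ψ_{L'}([u,v,w]_T) = [ψ_{L'}(u), ψ_{L'}(v), ψ_{L'}(w)]_{T'} for all u,v,w ∈ L'. -/
/-- a homomorphism `(ψ_L, ψ_{L'})` from `T` to `T'` makes `ψ_{L'}` a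
Lie triple system homomorphism between the descendent brackets. -/
theorem stmt13 {K : Type*} [Field K] [CharZero K]
    {L L' : Type*} [AddCommGroup L] [Module K L] [AddCommGroup L'] [Module K L']
    (br : L → L → L → L) (br' : L' → L' → L' → L') (θ : L → L → L' → L')
    (hL : IsLTS K br) (hL' : IsLTS K br') (hθ : IsAction K br br' θ) (lam : K)
    (T T' : L' →ₗ[K] L) (hT : IsRRB K br br' θ lam T) (hT' : IsRRB K br br' θ lam T')
    (ψL : L →ₗ[K] L) (ψL' : L' →ₗ[K] L')
    (hψL : ∀ a b c, ψL (br a b c) = br (ψL a) (ψL b) (ψL c))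
    (hψL' : ∀ u v w, ψL' (br' u v w) = br' (ψL' u) (ψL' v) (ψL' w))
    (hcomm : ∀ u, ψL (T u) = T' (ψL' u))
    (hθcomp : ∀ a b u, ψL' (θ a b u) = θ (ψL a) (ψL b) (ψL' u))
    (hDcomp : ∀ a b u, ψL' (Dop θ a b u) = Dop θ (ψL a) (ψL b) (ψL' u)) :
    ∀ u v w, ψL' (descBr br' θ lam T u v w)
      = descBr br' θ lam T' (ψL' u) (ψL' v) (ψL' w) := by
  intro u v w
  simp only [descBr, map_add, map_sub, map_smul, hDcomp, hθcomp, hψL', hcomm]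
end

section
/- Let T and T' be relative Rota-Baxter operators of weight λ from L' to L with respect to an action θ, and let (ψ_L, ψ_{L'}) be a homomorphism from T to T'. Then for all u,v ∈ L': ψ_L ∘ θ_T(u,v) = θ_{T'}(ψ_{L'}(u), ψ_{L'}(v)) ∘ ψ_L and ψ_L ∘ D_T(u,v) = D_{T'}(ψ_{L'}(u), ψ_{L'}(v)) ∘ ψ_L, where θ_T(u,v)x = [x,Tu,Tv]_L − T(D(x,Tu)v − θ(x,Tv)u) and D_T(u,v)x = [Tu,Tv,x]_L − T(θ(Tv,x)u − θ(Tu,x)v), and similarly for T'. -/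
/-- a homomorphism `(ψ_L, ψ_{L'})` from `T` to `T'` intertwines the
induced representations `θ_T` and `θ_{T'}` (and the corresponding `D_T`, `D_{T'}`). -/
theorem stmt14 {K : Type*} [Field K] [CharZero K]
    {L L' : Type*} [AddCommGroup L] [Module K L] [AddCommGroup L'] [Module K L']
    (br : L → L → L → L) (br' : L' → L' → L' → L') (θ : L → L → L' → L')
    (hL : IsLTS K br) (hL' : IsLTS K br') (hθ : IsAction K br br' θ) (lam : K)
    (T T' : L' →ₗ[K] L) (hT : IsRRB K br br' θ lam T) (hT' : IsRRB K br br' θ lam T')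
    (ψL : L →ₗ[K] L) (ψL' : L' →ₗ[K] L')
    (hψL : ∀ a b c, ψL (br a b c) = br (ψL a) (ψL b) (ψL c))
    (hψL' : ∀ u v w, ψL' (br' u v w) = br' (ψL' u) (ψL' v) (ψL' w))
    (hcomm : ∀ u, ψL (T u) = T' (ψL' u))
    (hθcomp : ∀ a b u, ψL' (θ a b u) = θ (ψL a) (ψL b) (ψL' u))
    (hDcomp : ∀ a b u, ψL' (Dop θ a b u) = Dop θ (ψL a) (ψL b) (ψL' u)) :
    ∀ u v x, ψL (thetaT br θ T u v x)
        = thetaT br θ T' (ψL' u) (ψL' v) (ψL x)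
      ∧ ψL (Dop (thetaT br θ T) u v x)
        = Dop (thetaT br θ T') (ψL' u) (ψL' v) (ψL x) := by
  have key : ∀ u v x, ψL (thetaT br θ T u v x)
      = thetaT br θ T' (ψL' u) (ψL' v) (ψL x) := by
    intro u v x
    simp only [thetaT, map_sub, hψL, hcomm, map_sub, hθcomp, hDcomp, hcomm]
  intro u v x
  refine ⟨key u v x, ?_⟩
  simp only [Dop, map_sub, key]
end

section
/- Let T and T' be relative Rota-Baxter operators of weight λ from L' to L, and (ψ_L, ψ_{L'}) a homomorphism from T to T' with ψ_{L'} invertible. The map p: C^{2n−1}_T(L',L) → C^{2n−1}_{T'}(L',L) defined by p(ω)(u₁,...,u_{2n−1}) = ψ_L(ω(ψ_{L'}⁻¹u₁,...,ψ_{L'}⁻¹u_{2n−1})) is a cochain map: p(∂_T ω) = ∂_{T'}(p(ω)) for all cochains ω. -/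
/-- The Yamaguti coboundary operator, sending a `(2n-1)`-cochain (a map on tuples of
length `m = 2n-1`, written here as a function on `Fin m`-tuples) to a `(2n+1)`-cochain.
Indices in the classical formula are 1-based; internally `v j` denotes `x_j`. -/
def cobound (K : Type*) [Field K] {A C : Type*}
    [AddCommGroup A] [Module K A] [AddCommGroup C] [Module K C]
    (br : A → A → A → A) (θ : A → A → C → C) {m : ℕ}
    (f : (Fin m → A) → C) : (Fin (m + 2) → A) → C :=
  fun vv =>
    let n : ℕ := (m + 1) / 2
    let v : ℕ → A := fun k => if h : k - 1 < m + 2 then vv ⟨k - 1, h⟩ else 0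
    let fv : (ℕ → A) → C := fun w => f (fun k => w ((k : ℕ) + 1))
    θ (v (2 * n)) (v (2 * n + 1)) (fv v)
      - θ (v (2 * n - 1)) (v (2 * n + 1))
          (fv (fun k => if k = 2 * n - 1 then v (2 * n) else v k))
      + ∑ i ∈ Finset.Icc 1 n, ((-1 : K) ^ (i + 1)) •
          Dop θ (v (2 * i - 1)) (v (2 * i))
            (fv (fun k => if k < 2 * i - 1 then v k else v (k + 2)))
      + ∑ i ∈ Finset.Icc 1 n, ∑ j ∈ Finset.Icc (2 * i + 1) (2 * n + 1),
          ((-1 : K) ^ (i + n + 1)) •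
            fv (fun k => if k < 2 * i - 1 then v k
                else if k + 2 = j then br (v (2 * i - 1)) (v (2 * i)) (v j)
                else v (k + 2))

/-- for a homomorphism `(ψ_L, ψ_{L'})` from `T` to `T'` with `ψ_{L'}`
invertible, the map `p(ω) = ψ_L ∘ ω ∘ (ψ_{L'}⁻¹)^{2n-1}` is a cochain map:
`p(∂_T ω) = ∂_{T'}(p ω)`. -/
theorem stmt15 {K : Type*} [Field K] [CharZero K]
    {L L' : Type*} [AddCommGroup L] [Module K L] [AddCommGroup L'] [Module K L']
    (br : L → L → L → L) (br' : L' → L' → L' → L') (θ : L → L → L' → L')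
    (hL : IsLTS K br) (hL' : IsLTS K br') (hθ : IsAction K br br' θ) (lam : K)
    (T T' : L' →ₗ[K] L) (hT : IsRRB K br br' θ lam T) (hT' : IsRRB K br br' θ lam T')
    (ψL : L →ₗ[K] L) (ψL' : L' ≃ₗ[K] L')
    (hψL : ∀ a b c, ψL (br a b c) = br (ψL a) (ψL b) (ψL c))
    (hψL' : ∀ u v w, ψL' (br' u v w) = br' (ψL' u) (ψL' v) (ψL' w))
    (hcomm : ∀ u, ψL (T u) = T' (ψL' u))
    (hθcomp : ∀ a b u, ψL' (θ a b u) = θ (ψL a) (ψL b) (ψL' u))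
    (hDcomp : ∀ a b u, ψL' (Dop θ a b u) = Dop θ (ψL a) (ψL b) (ψL' u))
    (n : ℕ) (hn : 1 ≤ n) (ω : (Fin (2 * n - 1) → L') → L)
    (hsym1 : ∀ (hn2 : 2 ≤ n) (vv : Fin (2 * n - 1) → L') (a : L'),
      ω (fun k => if (k : ℕ) = 2 * n - 4 ∨ (k : ℕ) = 2 * n - 3 then a else vv k) = 0)
    (hsym2 : ∀ (hn2 : 2 ≤ n) (vv : Fin (2 * n - 1) → L') (a b c : L'),
      ω (fun k => if (k : ℕ) = 2 * n - 4 then a else if (k : ℕ) = 2 * n - 3 then b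
          else if (k : ℕ) = 2 * n - 2 then c else vv k)
      + ω (fun k => if (k : ℕ) = 2 * n - 4 then b else if (k : ℕ) = 2 * n - 3 then c
          else if (k : ℕ) = 2 * n - 2 then a else vv k)
      + ω (fun k => if (k : ℕ) = 2 * n - 4 then c else if (k : ℕ) = 2 * n - 3 then a
          else if (k : ℕ) = 2 * n - 2 then b else vv k) = 0) :
    ∀ v : Fin (2 * n - 1 + 2) → L',
      ψL (cobound K (descBr br' θ lam T) (thetaT br θ T) ω
            (fun k => ψL'.symm (v k)))
        = cobound K (descBr br' θ lam T') (thetaT br θ T')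
            (fun u => ψL (ω (fun k => ψL'.symm (u k)))) v := by
  intro v
  -- compatibility of `descBr` with the homomorphism
  have h2 : ∀ u w x, ψL' (descBr br' θ lam T u w x)
      = descBr br' θ lam T' (ψL' u) (ψL' w) (ψL' x) := by
    intro u w x
    simp only [descBr, Dop, map_add, map_sub, map_smul, hθcomp, hcomm, hψL']
  have hsymmBr : ∀ u w x, ψL'.symm (descBr br' θ lam T' u w x)
      = descBr br' θ lam T (ψL'.symm u) (ψL'.symm w) (ψL'.symm x) := by
    intro u w x
    conv_lhs => rw [← ψL'.apply_symm_apply u, ← ψL'.apply_symm_apply w,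
      ← ψL'.apply_symm_apply x, ← h2, ψL'.symm_apply_apply]
  -- compatibility of `thetaT` with the homomorphism
  have hθT : ∀ u w x, ψL (thetaT br θ T u w x)
      = thetaT br θ T' (ψL' u) (ψL' w) (ψL x) := by
    intro u w x
    simp only [thetaT, Dop, map_sub, hcomm, hθcomp, hψL]
  have hw : ∀ k : ℕ, (if h : k - 1 < 2 * n - 1 + 2 then ψL'.symm (v ⟨k - 1, h⟩) else 0)
      = ψL'.symm (if h : k - 1 < 2 * n - 1 + 2 then v ⟨k - 1, h⟩ else 0) := by
    intro k; split <;> simp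
  simp only [cobound, hw, map_add, map_sub, map_sum, map_smul, Dop, hθT,
    LinearEquiv.apply_symm_apply, apply_ite (⇑ψL'.symm), hsymmBr]
end
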